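/- With ∂f/∂μ(z,μ) = πi/4 + (1/2)·log(μ/2 − z) + log 2 + (μ/(8T))·[log(z+T) − log(z−T) − 2·artanh(2T/μ)], where T = T(μ) = sqrt(μ²/4 − 1), the apparent singularity at μ = 2 (i.e., T = 0) is removable, and lim_{μ→2} ∂f/∂μ(z,μ) = πi/4 + (1/2)·log(1 − z) + log 2 + 1/(2z) − 1/2 for every z with Im z > 0. -/

import Mathlib

/-!
Both singular terms are difference quotients at `T = 0`. Writing `v = 2T/μ`,
`μ/(8T) · [log(z+T) − log(z−T) − 2 artanh v] = (μ/8) · (log(z+T) − log(z−T))/T − (1/2) · artanh(v)/v`,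
and as `μ → 2` through `μ ≠ 2` both `T` and `v` tend to `0` through nonzero values. The two
quotients tend to the derivatives `2/z` and `artanh'(0) = 1`, so the bracket term tends to
`(2/8)(2/z) − 1/2 = 1/(2z) − 1/2`, while the remaining terms are continuous at `μ = 2`.
-/

open Complex Filter Topology

theorem HasDerivAt.tendsto_symmetric_slope_zero {𝕜 F : Type*} [NontriviallyNormedField 𝕜]
    [NormedAddCommGroup F] [NormedSpace 𝕜 F] {f : 𝕜 → F} {f' : F} {x : 𝕜}
    (h : HasDerivAt f f' x) :
    Tendsto (fun t ↦ t⁻¹ • (f (x + t) - f (x - t))) (𝓝[≠] 0) (𝓝 ((2 : 𝕜) • f')) := by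
  have hx : HasDerivAt f f' (x + 0) := by simpa using h
  have hx' : HasDerivAt f f' (x - 0) := by simpa using h
  have hg : HasDerivAt (fun t ↦ f (x + t) - f (x - t)) ((2 : 𝕜) • f') 0 := by
    refine ((hx.comp_const_add x 0).sub (hx'.comp_const_sub x 0)).congr_deriv ?_
    rw [two_smul, sub_neg_eq_add]
  simpa using hg.tendsto_slope_zero

theorem Complex.tendsto_log_add_sub_log_sub_div {z : ℂ} (hz : z ∈ slitPlane) :
    Tendsto (fun w ↦ (log (z + w) - log (z - w)) / w) (𝓝[≠] 0) (𝓝 (2 / z)) := by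
  simpa [div_eq_inv_mul, mul_comm] using (hasDerivAt_log hz).tendsto_symmetric_slope_zero

noncomputable def Complex.artanh (w : ℂ) : ℂ := 1 / 2 * log ((1 + w) / (1 - w))

theorem Complex.hasDerivAt_artanh_zero : HasDerivAt artanh 1 0 := by
  have hq : HasDerivAt (fun w : ℂ ↦ (1 + w) / (1 - w)) 2 0 := by
    refine (((hasDerivAt_id' (0 : ℂ)).const_add 1).div ((hasDerivAt_id' (0 : ℂ)).const_sub 1)
      (by norm_num)).congr_deriv ?_
    norm_num
  have hlog : HasDerivAt log 1 ((1 + 0) / (1 - 0)) := by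
    simpa using hasDerivAt_log (z := 1) (by simp)
  refine ((hlog.comp 0 hq).const_mul (1 / 2 : ℂ)).congr_deriv ?_
  norm_num

theorem Complex.tendsto_artanh_div : Tendsto (fun w ↦ artanh w / w) (𝓝[≠] 0) (𝓝 1) := by
  simpa [div_eq_inv_mul, artanh] using hasDerivAt_artanh_zero.tendsto_slope_zero

theorem Complex.tendsto_cpow_nhdsNE_zero {s : ℂ} (hs : 0 < s.re) :
    Tendsto (· ^ s) (𝓝[≠] (0 : ℂ)) (𝓝[≠] 0) := by
  refine tendsto_nhdsWithin_iff.2 ⟨?_, eventually_nhdsWithin_of_forall fun w hw ↦ ?_⟩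
  · have := (continuousAt_cpow_const_of_re_pos (z := 0) (by simp) hs).tendsto
    rw [zero_cpow (by rintro rfl; simp at hs)] at this
    exact this.mono_left nhdsWithin_le_nhds
  · exact fun h ↦ hw ((cpow_eq_zero_iff _ _).1 h).1

theorem Complex.tendsto_ofReal_nhdsNE_zero : Tendsto ((↑) : ℝ → ℂ) (𝓝[≠] 0) (𝓝[≠] 0) :=
  tendsto_nhdsWithin_iff.2 ⟨continuous_ofReal.continuousWithinAt.tendsto.trans (by simp),
    eventually_nhdsWithin_of_forall fun _ hx ↦ ofReal_ne_zero.2 hx⟩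

theorem tendsto_sq_div_four_sub_one_nhdsNE_two :
    Tendsto (fun μ : ℝ ↦ μ ^ 2 / 4 - 1) (𝓝[≠] 2) (𝓝[≠] 0) := by
  have h : HasDerivAt (fun μ : ℝ ↦ μ ^ 2 / 4 - 1) 1 2 := by
    refine (((hasDerivAt_pow 2 (2 : ℝ)).div_const 4).sub_const 1).congr_deriv ?_
    norm_num
  have := h.tendsto_nhdsNE one_ne_zero
  norm_num at this
  exact this

theorem Filter.Tendsto.div_nhdsNE_zero {α 𝕜 : Type*} [NormedField 𝕜] {l : Filter α}
    {f g : α → 𝕜} {c : 𝕜} (hf : Tendsto f l (𝓝[≠] 0)) (hg : Tendsto g l (𝓝 c)) (hc : c ≠ 0) :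
    Tendsto (fun a ↦ f a / g a) l (𝓝[≠] 0) := by
  refine tendsto_nhdsWithin_iff.2 ⟨?_, ?_⟩
  · have := (tendsto_nhdsWithin_iff.1 hf).1.div hg hc
    rwa [zero_div] at this
  · filter_upwards [(tendsto_nhdsWithin_iff.1 hf).2, hg.eventually_ne hc] with a hfa hga
    exact div_ne_zero hfa hga

theorem Complex.tendsto_div_mul_log_sub_log_sub_artanh {α : Type*} {l : Filter α} {z : ℂ}
    (hz : z ∈ slitPlane) {μ T : α → ℂ} (hμ : Tendsto μ l (𝓝 2)) (hT : Tendsto T l (𝓝[≠] 0)) :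
    Tendsto (fun a ↦ μ a / (8 * T a) * (log (z + T a) - log (z - T a)
        - 2 * artanh (2 * T a / μ a)))
      l (𝓝 (1 / (2 * z) - 1 / 2)) := by
  have hv : Tendsto (fun a ↦ 2 * T a / μ a) l (𝓝[≠] 0) := by
    simpa only [div_div_eq_mul_div, mul_comm] using
      hT.div_nhdsNE_zero (hμ.div_const 2) (by norm_num)
  have hlim := ((hμ.div_const 8).mul ((tendsto_log_add_sub_log_sub_div hz).comp hT)).sub
    ((tendsto_artanh_div.comp hv).const_mul (1 / 2))
  have hz0 : z ≠ 0 := slitPlane_ne_zero hz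
  convert hlim.congr' ?_ using 2
  · field_simp
    ring
  filter_upwards [(tendsto_nhdsWithin_iff.1 hT).2, hμ.eventually_ne two_ne_zero] with a hTa hμa
  simp only [Function.comp_apply]
  field_simp
  ring

/-- The apparent singularity of
∂f/∂μ(z,μ) = πi/4 + (1/2)log(μ/2 − z) + log 2 + (μ/(8T))[log(z+T) − log(z−T) − 2 artanh(2T/μ)]
(with T = T(μ) = sqrt(μ²/4 − 1), Im T ≥ 0) at μ = 2 is removable:
as real μ → 2 (μ ≠ 2), it tends to πi/4 + (1/2)log(1−z) + log 2 + 1/(2z) − 1/2,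
for every z with Im z > 0.  Here artanh(w) = (1/2)log((1+w)/(1−w)). -/
theorem stmt_5 (z : ℂ) (hz : 0 < z.im)
    (T : ℝ → ℂ) (hT : ∀ μ : ℝ, T μ = ((μ ^ 2 / 4 - 1 : ℝ) : ℂ) ^ (1 / 2 : ℂ))
    (artanh : ℂ → ℂ) (hartanh : ∀ w : ℂ, artanh w = (1 / 2) * Complex.log ((1 + w) / (1 - w)))
    (F : ℝ → ℂ)
    (hF : ∀ μ : ℝ, F μ =
      (Real.pi : ℂ) * Complex.I / 4 + (1 / 2) * Complex.log ((μ / 2 : ℝ) - z)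
        + Complex.log 2
        + ((μ : ℂ) / (8 * T μ)) *
            (Complex.log (z + T μ) - Complex.log (z - T μ) - 2 * artanh (2 * T μ / μ))) :
    Tendsto F (nhdsWithin 2 {μ : ℝ | μ ≠ 2})
      (nhds ((Real.pi : ℂ) * Complex.I / 4 + (1 / 2) * Complex.log (1 - z)
        + Complex.log 2 + 1 / (2 * z) - 1 / 2)) := by
  have hTlim : Tendsto T (𝓝[≠] 2) (𝓝[≠] 0) := by
    rw [funext hT]
    exact (tendsto_cpow_nhdsNE_zero (by norm_num)).comp
      (tendsto_ofReal_nhdsNE_zero.comp tendsto_sq_div_four_sub_one_nhdsNE_two)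
  have hμ : Tendsto (fun μ : ℝ ↦ (μ : ℂ)) (𝓝[≠] 2) (𝓝 2) :=
    (continuous_ofReal.tendsto' 2 2 (by simp)).mono_left nhdsWithin_le_nhds
  have hlog : Tendsto (fun μ : ℝ ↦ log ((μ / 2 : ℝ) - z)) (𝓝[≠] 2) (𝓝 (log (1 - z))) := by
    have hcont : ContinuousAt (fun μ : ℝ ↦ log ((μ / 2 : ℝ) - z)) 2 := by
      refine ContinuousAt.clog (by fun_prop) (Or.inr ?_)
      simpa using hz.ne'
    simpa using hcont.tendsto.mono_left nhdsWithin_le_nhds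
  change Tendsto F (𝓝[≠] 2) _
  rw [funext hF]
  obtain rfl : artanh = Complex.artanh := funext hartanh
  convert ((tendsto_const_nhds.add (hlog.const_mul (1 / 2))).add tendsto_const_nhds).add
    (tendsto_div_mul_log_sub_log_sub_artanh (Or.inr hz.ne') hμ hTlim) using 2
  ring
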